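/- Let Σ_S, D_1, D_2 be ℓ×ℓ real symmetric matrices with 0 ≺ D_1 ⪯ D_2 ≺ Σ_S (Loewner order), let κ > 0 and 0 < N_1 ≤ N_2. Then P* := min{P ≥ 0 : ℛ₁(Σ_S,D_1,D_2) ⊆ κ·𝒞_G(P,N_1,N_2)} exists and P* = sup over positive definite Σ_Z of [ N_1·(|Σ_S|·|D_1+Σ_Z| / (|D_1|·|D_2+Σ_Z|))^{1/κ} + (N_2−N_1)·(|Σ_S+Σ_Z| / |D_2+Σ_Z|)^{1/κ} − N_2 ]. -/

import Mathlib

/-! The set `κ·𝒞_G(P, N₁, N₂)` is cut out of the positive quadrant by one inequality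
`N₁ 4^{(R₁+R₂)/κ} + (N₂ - N₁) 4^{R₂/κ} - N₂ ≤ P` (eliminate `β`), whose left side is convex,
continuous and monotone in `R`. Hence `ℛ₁ ⊆ κ·𝒞_G(P, N₁, N₂)` iff, for every `Σ_Z ≻ 0`, the corner
of the rectangle of rate pairs allowed by `Σ_Z` satisfies it, and at that corner the left side is
exactly the expression under the supremum. The Loewner-order determinant inequality
`|A + Z| |B| ≤ |A| |B + Z|` for `B ⪯ A` places all corners in a bounded box of the quadrant, so
these values are bounded and nonnegative, and their supremum is the least admissible power. -/

open scoped BigOperators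
open Finset

noncomputable section

/-- `κ·𝒜` for a set of rate pairs. -/
def scaleSet (κ : ℝ) (A : Set (ℝ × ℝ)) : Set (ℝ × ℝ) :=
  (fun R : ℝ × ℝ => (κ * R.1, κ * R.2)) '' A

/-- The region `ℛ₁(Σ_S, D₁, D₂)` (convex closure). -/
def RregG1 {l : ℕ} (SS D1 D2 : Matrix (Fin l) (Fin l) ℝ) : Set (ℝ × ℝ) :=
  closure (convexHull ℝ {R : ℝ × ℝ | 0 ≤ R.1 ∧ 0 ≤ R.2 ∧
    ∃ SZ : Matrix (Fin l) (Fin l) ℝ, SZ.PosDef ∧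
      R.1 ≤ (1/2) * Real.logb 2
        (SS.det * (D1 + SZ).det / (D1.det * (SS + SZ).det)) ∧
      R.2 ≤ (1/2) * Real.logb 2 ((SS + SZ).det / (D2 + SZ).det)})

/-- The explicit capacity region `𝒞_G(P, N₁, N₂)` of the scalar Gaussian
broadcast channel. -/
def CG (P N1 N2 : ℝ) : Set (ℝ × ℝ) :=
  {R | 0 ≤ R.1 ∧ 0 ≤ R.2 ∧ ∃ β ∈ Set.Icc (0:ℝ) 1,
    R.1 ≤ (1/2) * Real.logb 2 ((β * P + N1) / N1) ∧
    R.2 ≤ (1/2) * Real.logb 2 ((P + N2) / (β * P + N2))}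

open scoped MatrixOrder

namespace Matrix

variable {n : Type*}

theorem PosDef.of_le [Finite n] {A B : Matrix n n ℝ} (hB : B.PosDef) (hBA : B ≤ A) :
    A.PosDef := by
  simpa using hB.add_posSemidef hBA

variable [Fintype n] [DecidableEq n]

theorem one_le_det_one_add {S : Matrix n n ℝ} (hS : 0 ≤ S) : 1 ≤ (1 + S).det := by
  have hS := nonneg_iff_posSemidef.mp hS
  set U := hS.isHermitian.eigenvectorUnitary
  have hS' := hS.isHermitian.spectral_theorem
  rw [Unitary.conjStarAlgAut_apply] at hS'
  have h1 : 1 + S = (U : Matrix n n ℝ) *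
      (1 + diagonal (RCLike.ofReal ∘ hS.isHermitian.eigenvalues)) * star (U : Matrix n n ℝ) := by
    rw [mul_add, add_mul, mul_one, Unitary.mul_star_self_of_mem U.2, ← hS']
  rw [h1, det_mul_comm, ← mul_assoc, Unitary.star_mul_self_of_mem U.2, one_mul,
    ← diagonal_one, diagonal_add, det_diagonal]
  exact Finset.one_le_prod (fun i _ => by simpa using hS.eigenvalues_nonneg i)

theorem det_add_eq_mul_det_one_add_sqrt_conj {X Z : Matrix n n ℝ} (hX : IsUnit X.det)
    (hZ : 0 ≤ Z) : (X + Z).det = X.det * (1 + CFC.sqrt Z * X⁻¹ * CFC.sqrt Z).det := by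
  have hXZ : X + Z = X * (1 + X⁻¹ * (CFC.sqrt Z * CFC.sqrt Z)) := by
    rw [CFC.sqrt_mul_sqrt_self Z hZ, mul_add, mul_one, mul_nonsing_inv_cancel_left _ _ hX]
  rw [hXZ, det_mul, ← mul_assoc, det_one_add_mul_comm, mul_assoc]

namespace PosDef

theorem det_le_det {A B : Matrix n n ℝ} (hB : B.PosDef) (hBA : B ≤ A) : B.det ≤ A.det := by
  have hAB : 0 ≤ A - B := sub_nonneg.mpr hBA
  rw [← add_sub_cancel B A, det_add_eq_mul_det_one_add_sqrt_conj
    ((isUnit_iff_isUnit_det B).mp hB.isUnit) hAB]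
  exact le_mul_of_one_le_right hB.det_pos.le <| one_le_det_one_add <|
    conjugate_nonneg_of_nonneg hB.inv.posSemidef.nonneg (CFC.sqrt_nonneg _)

theorem inv_le_inv {A B : Matrix n n ℝ} (hB : B.PosDef) (hBA : B ≤ A) : A⁻¹ ≤ B⁻¹ := by
  have hA := hB.of_le hBA
  have := hA.isUnit.invertible
  have := hB.isUnit.invertible
  have := hB.inv.isUnit.invertible
  -- `[A 1; 1 B⁻¹]` is positive semidefinite iff its Schur complement `B⁻¹ - A⁻¹` is,
  -- and also iff its Schur complement `A - B` is.
  have h := (fromBlocks₁₁ 1 B⁻¹ hA).symm.trans (fromBlocks₂₂ A 1 hB.inv)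
  simp only [conjTranspose_one, mul_one, one_mul, inv_inv_of_invertible] at h
  exact h.mpr hBA

theorem det_add_mul_det_le {A B Z : Matrix n n ℝ} (hB : B.PosDef) (hBA : B ≤ A) (hZ : 0 ≤ Z) :
    (A + Z).det * B.det ≤ A.det * (B + Z).det := by
  have hA := hB.of_le hBA
  rw [det_add_eq_mul_det_one_add_sqrt_conj ((isUnit_iff_isUnit_det A).mp hA.isUnit) hZ,
    det_add_eq_mul_det_one_add_sqrt_conj ((isUnit_iff_isUnit_det B).mp hB.isUnit) hZ]
  have hle : (1 + CFC.sqrt Z * A⁻¹ * CFC.sqrt Z).det ≤ (1 + CFC.sqrt Z * B⁻¹ * CFC.sqrt Z).det :=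
    det_le_det (PosDef.one.add_posSemidef (nonneg_iff_posSemidef.mp
        (conjugate_nonneg_of_nonneg hA.inv.posSemidef.nonneg (CFC.sqrt_nonneg Z))))
      (add_le_add_right
        (conjugate_le_conjugate_of_nonneg (inv_le_inv hB hBA) (CFC.sqrt_nonneg Z)) 1)
  calc A.det * (1 + CFC.sqrt Z * A⁻¹ * CFC.sqrt Z).det * B.det
      ≤ A.det * (1 + CFC.sqrt Z * B⁻¹ * CFC.sqrt Z).det * B.det := by
        gcongr
        · exact hB.det_pos.le
        · exact hA.det_pos.le
    _ = A.det * (B.det * (1 + CFC.sqrt Z * B⁻¹ * CFC.sqrt Z).det) := by ring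

end PosDef

end Matrix

-- For `R ≥ 0`, the least `P` with `R ∈ κ·𝒞_G(P, N₁, N₂)`; see `scaleSet_CG_eq`.
def requiredPower (κ N1 N2 : ℝ) (R : ℝ × ℝ) : ℝ :=
  N1 * 2 ^ (2 * (R.1 + R.2) / κ) + (N2 - N1) * 2 ^ (2 * R.2 / κ) - N2

theorem le_half_logb_two_iff {x y : ℝ} (hy : 0 < y) :
    x ≤ (1/2) * Real.logb 2 y ↔ (2:ℝ) ^ (2 * x) ≤ y := by
  rw [← Real.le_logb_iff_rpow_le one_lt_two hy]
  constructor <;> intro h <;> linarith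

theorem mem_CG_iff {P N1 N2 : ℝ} (hN1 : 0 < N1) (hN12 : N1 ≤ N2) (hP : 0 ≤ P) (R : ℝ × ℝ) :
    R ∈ CG P N1 N2 ↔ 0 ≤ R ∧ requiredPower 1 N1 N2 R ≤ P := by
  obtain ⟨x, y⟩ := R
  set u : ℝ := 2 ^ (2 * x)
  set w : ℝ := 2 ^ (2 * y)
  have hw : 0 < w := by positivity
  have hreq : requiredPower 1 N1 N2 (x, y) = (N1 * u + (N2 - N1)) * w - N2 := by
    simp only [requiredPower, div_one, mul_add, Real.rpow_add two_pos, u, w]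
    ring
  rw [hreq]
  constructor
  · rintro ⟨hx, hy, β, ⟨hβ0, -⟩, h1, h2⟩
    have hβP : 0 ≤ β * P := mul_nonneg hβ0 hP
    rw [le_half_logb_two_iff (div_pos (by linarith) hN1), le_div_iff₀ hN1] at h1
    rw [le_half_logb_two_iff (div_pos (by linarith) (by linarith)),
      le_div_iff₀ (by linarith)] at h2
    refine ⟨⟨hx, hy⟩, ?_⟩
    nlinarith
  · rintro ⟨⟨hx : 0 ≤ x, hy : 0 ≤ y⟩, h⟩
    have hu1 : 1 ≤ u := Real.one_le_rpow one_le_two (by linarith)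
    have hw1 : 1 ≤ w := Real.one_le_rpow one_le_two (by linarith)
    -- `β P = N₁ (4^{R₁} - 1)` is the least power meeting the first rate constraint.
    have hspent : N1 * (u - 1) ≤ P := by nlinarith
    have hβP : N1 * (u - 1) / P * P = N1 * (u - 1) := by
      rcases hP.eq_or_lt with rfl | hP'
      · have : N1 * (u - 1) = 0 := by nlinarith
        simp [this]
      · exact div_mul_cancel₀ _ hP'.ne'
    refine ⟨hx, hy, N1 * (u - 1) / P, ⟨by positivity, div_le_one_of_le₀ hspent hP⟩, ?_, ?_⟩
    · rw [hβP, le_half_logb_two_iff (div_pos (by nlinarith) hN1), le_div_iff₀ hN1]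
      linarith
    · rw [hβP, le_half_logb_two_iff (div_pos (by linarith) (by nlinarith)),
        le_div_iff₀ (by nlinarith)]
      linarith

theorem mem_scaleSet_iff {κ : ℝ} (hκ : κ ≠ 0) (A : Set (ℝ × ℝ)) (R : ℝ × ℝ) :
    R ∈ scaleSet κ A ↔ κ⁻¹ • R ∈ A :=
  Set.mem_smul_set_iff_inv_smul_mem₀ hκ A R

theorem requiredPower_one_inv_smul (κ N1 N2 : ℝ) (R : ℝ × ℝ) :
    requiredPower 1 N1 N2 (κ⁻¹ • R) = requiredPower κ N1 N2 R := by
  simp only [requiredPower, Prod.smul_fst, Prod.smul_snd, smul_eq_mul]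
  ring_nf

theorem scaleSet_CG_eq {κ P N1 N2 : ℝ} (hκ : 0 < κ) (hN1 : 0 < N1) (hN12 : N1 ≤ N2)
    (hP : 0 ≤ P) :
    scaleSet κ (CG P N1 N2) = Set.Ici 0 ∩ {R | requiredPower κ N1 N2 R ≤ P} := by
  ext R
  rw [mem_scaleSet_iff hκ.ne', mem_CG_iff hN1 hN12 hP, requiredPower_one_inv_smul,
    smul_nonneg_iff_nonneg_of_pos_left (inv_pos.mpr hκ)]
  rfl

theorem requiredPower_zero (κ N1 N2 : ℝ) : requiredPower κ N1 N2 0 = 0 := by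
  simp [requiredPower]

theorem monotone_requiredPower {κ N1 N2 : ℝ} (hκ : 0 < κ) (hN1 : 0 ≤ N1) (hN12 : N1 ≤ N2) :
    Monotone (requiredPower κ N1 N2) := by
  intro R R' ⟨h1, h2⟩
  have hN : 0 ≤ N2 - N1 := sub_nonneg.mpr hN12
  unfold requiredPower
  gcongr <;> norm_num

theorem continuous_requiredPower (κ N1 N2 : ℝ) : Continuous (requiredPower κ N1 N2) := by
  unfold requiredPower
  fun_prop (disch := norm_num)

theorem convexOn_requiredPower {κ N1 N2 : ℝ} (hN1 : 0 ≤ N1) (hN12 : N1 ≤ N2) :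
    ConvexOn ℝ Set.univ (requiredPower κ N1 N2) := by
  have hexp := convexOn_rpow_left (b := 2) two_pos
  have h1 : ConvexOn ℝ Set.univ fun R : ℝ × ℝ => (2:ℝ) ^ (2 * (R.1 + R.2) / κ) :=
    (hexp.comp_linearMap ((2 / κ) • (LinearMap.fst ℝ ℝ ℝ + LinearMap.snd ℝ ℝ ℝ))).congr
      fun R _ => by simp; ring_nf
  have h2 : ConvexOn ℝ Set.univ fun R : ℝ × ℝ => (2:ℝ) ^ (2 * R.2 / κ) :=
    (hexp.comp_linearMap ((2 / κ) • LinearMap.snd ℝ ℝ ℝ)).congr fun R _ => by simp; ring_nf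
  exact (((h1.smul hN1).add (h2.smul (sub_nonneg.mpr hN12))).add_const (-N2)).congr
    fun R _ => by simp [requiredPower, sub_eq_add_neg]

theorem requiredPower_half_logb (κ N1 N2 : ℝ) {a b : ℝ} (ha : 0 < a) (hb : 0 < b) :
    requiredPower κ N1 N2 ((1/2) * Real.logb 2 a, (1/2) * Real.logb 2 b)
      = N1 * (a * b) ^ (1/κ) + (N2 - N1) * b ^ (1/κ) - N2 := by
  have h2 : ∀ x : ℝ, 0 < x → (2:ℝ) ^ (2 * ((1/2) * Real.logb 2 x) / κ) = x ^ (1/κ) := by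
    intro x hx
    rw [show 2 * ((1/2) * Real.logb 2 x) / κ = Real.logb 2 x * (1/κ) by ring,
      Real.rpow_mul zero_le_two, Real.rpow_logb two_pos one_lt_two.ne' hx]
  rw [requiredPower, ← mul_add, ← Real.logb_mul ha.ne' hb.ne', h2 _ (mul_pos ha hb), h2 _ hb]

section Corner

variable {n : Type*} [Fintype n] [DecidableEq n]

def cornerRate (SS D1 D2 Z : Matrix n n ℝ) : ℝ × ℝ :=
  ((1/2) * Real.logb 2 (SS.det * (D1 + Z).det / (D1.det * (SS + Z).det)),
    (1/2) * Real.logb 2 ((SS + Z).det / (D2 + Z).det))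

variable {SS D1 D2 Z : Matrix n n ℝ}

theorem zero_le_cornerRate (hD1 : D1.PosDef) (hD12 : D1 ≤ D2) (hD2S : D2 ≤ SS)
    (hZ : Z.PosDef) : 0 ≤ cornerRate SS D1 D2 Z := by
  have hD2 : D2.PosDef := hD1.of_le hD12
  have hSZ : (SS + Z).PosDef := (hD2.of_le hD2S).add hZ
  refine ⟨mul_nonneg one_half_pos.le (Real.logb_nonneg one_lt_two ?_),
    mul_nonneg one_half_pos.le (Real.logb_nonneg one_lt_two ?_)⟩
  · rw [one_le_div (mul_pos hD1.det_pos hSZ.det_pos), mul_comm]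
    exact hD1.det_add_mul_det_le (hD12.trans hD2S) hZ.posSemidef.nonneg
  · rw [one_le_div (hD2.add hZ).det_pos]
    exact (hD2.add hZ).det_le_det (add_le_add_left hD2S Z)

theorem cornerRate_le (hD1 : D1.PosDef) (hD12 : D1 ≤ D2) (hD2S : D2 ≤ SS) (hZ : Z.PosDef) :
    cornerRate SS D1 D2 Z ≤
      ((1/2) * Real.logb 2 (SS.det / D1.det), (1/2) * Real.logb 2 (SS.det / D2.det)) := by
  have hD2 : D2.PosDef := hD1.of_le hD12
  have hSS : SS.PosDef := hD2.of_le hD2S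
  have hSZ : (SS + Z).PosDef := hSS.add hZ
  have hmono := (hD1.add hZ).det_le_det (add_le_add_left (hD12.trans hD2S) Z)
  have h1 : SS.det * (D1 + Z).det / (D1.det * (SS + Z).det) ≤ SS.det / D1.det := by
    rw [div_le_div_iff₀ (mul_pos hD1.det_pos hSZ.det_pos) hD1.det_pos]
    have := mul_le_mul_of_nonneg_left hmono (mul_nonneg hSS.det_pos.le hD1.det_pos.le)
    linarith
  have h2 : (SS + Z).det / (D2 + Z).det ≤ SS.det / D2.det := by
    rw [div_le_div_iff₀ (hD2.add hZ).det_pos hD2.det_pos]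
    exact hD2.det_add_mul_det_le hD2S hZ.posSemidef.nonneg
  have half_logb_le {x y : ℝ} (hx : 0 < x) (hxy : x ≤ y) :
      (1/2) * Real.logb 2 x ≤ (1/2) * Real.logb 2 y := by
    gcongr
    norm_num
  exact ⟨half_logb_le (div_pos (mul_pos hSS.det_pos (hD1.add hZ).det_pos)
      (mul_pos hD1.det_pos hSZ.det_pos)) h1,
    half_logb_le (div_pos hSZ.det_pos (hD2.add hZ).det_pos) h2⟩

theorem requiredPower_cornerRate (κ N1 N2 : ℝ) (hD1 : D1.PosDef) (hD12 : D1 ≤ D2)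
    (hD2S : D2 ≤ SS) (hZ : Z.PosDef) :
    requiredPower κ N1 N2 (cornerRate SS D1 D2 Z)
      = N1 * (SS.det * (D1 + Z).det / (D1.det * (D2 + Z).det)) ^ (1/κ)
          + (N2 - N1) * ((SS + Z).det / (D2 + Z).det) ^ (1/κ) - N2 := by
  have hD2 : D2.PosDef := hD1.of_le hD12
  have hSS : SS.PosDef := hD2.of_le hD2S
  have := hD1.det_pos; have := hD2.det_pos; have := hSS.det_pos
  have := (hD1.add hZ).det_pos; have := (hD2.add hZ).det_pos; have := (hSS.add hZ).det_pos
  rw [cornerRate, requiredPower_half_logb _ _ _ (by positivity) (by positivity)]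
  congr 4
  field_simp

end Corner

theorem RregG1_subset_scaleSet_CG_iff {l : ℕ} {SS D1 D2 : Matrix (Fin l) (Fin l) ℝ}
    (hD1 : D1.PosDef) (hD12 : D1 ≤ D2) (hD2S : D2 ≤ SS) {κ P N1 N2 : ℝ} (hκ : 0 < κ)
    (hN1 : 0 < N1) (hN12 : N1 ≤ N2) (hP : 0 ≤ P) :
    RregG1 SS D1 D2 ⊆ scaleSet κ (CG P N1 N2) ↔
      ∀ Z : Matrix (Fin l) (Fin l) ℝ, Z.PosDef →
        requiredPower κ N1 N2 (cornerRate SS D1 D2 Z) ≤ P := by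
  have hconvex : Convex ℝ (Set.Ici 0 ∩ {R | requiredPower κ N1 N2 R ≤ P}) :=
    (convex_Ici 0).inter (by simpa using (convexOn_requiredPower (κ := κ) hN1.le hN12).convex_le P)
  have hclosed : IsClosed (Set.Ici 0 ∩ {R | requiredPower κ N1 N2 R ≤ P}) :=
    isClosed_Ici.inter (isClosed_le (continuous_requiredPower κ N1 N2) continuous_const)
  rw [scaleSet_CG_eq hκ hN1 hN12 hP, RregG1, hclosed.closure_subset_iff,
    hconvex.convexHull_subset_iff]
  constructor
  · intro h Z hZ
    have hcorner := zero_le_cornerRate hD1 hD12 hD2S hZ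
    exact (h ⟨hcorner.1, hcorner.2, Z, hZ, le_rfl, le_rfl⟩).2
  · rintro h R ⟨hR1, hR2, Z, hZ, h1, h2⟩
    exact ⟨⟨hR1, hR2⟩, (monotone_requiredPower hκ hN1.le hN12 ⟨h1, h2⟩).trans (h Z hZ)⟩

theorem isLeast_csSup_image {ι : Type*} {s : Set ι} {f : ι → ℝ} (hbdd : BddAbove (f '' s))
    (hnonneg : ∃ i ∈ s, 0 ≤ f i) :
    IsLeast {P | 0 ≤ P ∧ ∀ i ∈ s, f i ≤ P} (sSup (f '' s)) := by
  obtain ⟨i, hi, hfi⟩ := hnonneg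
  have hne : (f '' s).Nonempty := ⟨f i, i, hi, rfl⟩
  refine ⟨⟨hfi.trans (le_csSup hbdd ⟨i, hi, rfl⟩), fun j hj => le_csSup hbdd ⟨j, hj, rfl⟩⟩, ?_⟩
  rintro P ⟨-, hP⟩
  exact csSup_le hne (Set.forall_mem_image.2 hP)

/-- **Equation (73).** The minimal power `P*` for which
`ℛ₁(Σ_S,D₁,D₂) ⊆ κ·𝒞_G(P,N₁,N₂)` exists and equals
`sup_{Σ_Z ≻ 0} N₁(|Σ_S||D₁+Σ_Z|/(|D₁||D₂+Σ_Z|))^{1/κ}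
  + (N₂−N₁)(|Σ_S+Σ_Z|/|D₂+Σ_Z|)^{1/κ} − N₂`. -/
theorem minimalPower_formula
    {l : ℕ} (SS D1 D2 : Matrix (Fin l) (Fin l) ℝ)
    (hD1 : D1.PosDef) (hD12 : (D2 - D1).PosSemidef) (hD2S : (SS - D2).PosDef)
    (κ : ℝ) (hκ : 0 < κ) (N1 N2 : ℝ) (hN1 : 0 < N1) (hN12 : N1 ≤ N2) :
    ∃ Pstar : ℝ,
      IsLeast {P : ℝ | 0 ≤ P ∧ RregG1 SS D1 D2 ⊆ scaleSet κ (CG P N1 N2)} Pstar ∧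
      Pstar = sSup {v : ℝ | ∃ SZ : Matrix (Fin l) (Fin l) ℝ, SZ.PosDef ∧
        v = N1 * (SS.det * (D1 + SZ).det / (D1.det * (D2 + SZ).det)) ^ (1/κ)
              + (N2 - N1) * ((SS + SZ).det / (D2 + SZ).det) ^ (1/κ)
              - N2} := by
  have hD12' : D1 ≤ D2 := hD12
  have hD2S' : D2 ≤ SS := hD2S.posSemidef
  set g := fun Z => requiredPower κ N1 N2 (cornerRate SS D1 D2 Z)
  have hV : {v : ℝ | ∃ SZ : Matrix (Fin l) (Fin l) ℝ, SZ.PosDef ∧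
        v = N1 * (SS.det * (D1 + SZ).det / (D1.det * (D2 + SZ).det)) ^ (1/κ)
              + (N2 - N1) * ((SS + SZ).det / (D2 + SZ).det) ^ (1/κ) - N2}
      = g '' {Z | Z.PosDef} := by
    ext v
    refine exists_congr fun Z => and_congr_right fun hZ => ?_
    show _ ↔ requiredPower κ N1 N2 (cornerRate SS D1 D2 Z) = v
    rw [requiredPower_cornerRate κ N1 N2 hD1 hD12' hD2S' hZ, eq_comm]
  have hbdd : BddAbove (g '' {Z | Z.PosDef}) :=
    ⟨_, Set.forall_mem_image.2 fun Z hZ =>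
      monotone_requiredPower hκ hN1.le hN12 (cornerRate_le hD1 hD12' hD2S' hZ)⟩
  have hnonneg : 0 ≤ g 1 := requiredPower_zero κ N1 N2 ▸
    monotone_requiredPower hκ hN1.le hN12 (zero_le_cornerRate hD1 hD12' hD2S' Matrix.PosDef.one)
  rw [hV]
  refine ⟨_, ?_, rfl⟩
  convert isLeast_csSup_image hbdd ⟨1, Matrix.PosDef.one, hnonneg⟩ using 3 with P
  exact and_congr_right fun hP => RregG1_subset_scaleSet_CG_iff hD1 hD12' hD2S' hκ hN1 hN12 hP

end
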